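/- Let v : ℝ × ℝ → ℝ be a smooth function of (x,t) with v_xx(x,t) ≠ 0 for all (x,t), satisfying the evolution equation v_t = −v_x²/v_xx. Define η : ℝ × ℝ → ℝ by η = 2 v_x³ v_xxx / v_xx³ − 3 v_x² / v_xx. Then η satisfies the linearized equation ∂η/∂t = ( −2 v_x/v_xx )·∂η/∂x + ( v_x²/v_xx² )·∂²η/∂x² at every point (x,t). -/

import Mathlib

/-- Partial derivative with respect to the first (space) variable. -/
noncomputable def pdx (f : ℝ × ℝ → ℝ) : ℝ × ℝ → ℝ :=
  fun p => deriv (fun x => f (x, p.2)) p.1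

/-- Partial derivative with respect to the second (time) variable. -/
noncomputable def pdt (f : ℝ × ℝ → ℝ) : ℝ × ℝ → ℝ :=
  fun p => deriv (fun t => f (p.1, t)) p.2

/-!
Every quantity involved is a rational function of the space jet `v_x, …, v_xxxxx` with powers
of `v_xx` as denominators. Since mixed partials of a smooth function commute, `v_xt`, `v_xxt`,
`v_xxxt` are the successive `x`-derivatives of `v_t = -v_x² / v_xx`; the chain rule then gives
`η_t` in terms of them, while `η_x` and `η_xx` are computed directly. Substituting everything,
the linearized equation becomes an identity between rational functions of the jet.
-/

open scoped ContDiff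

section PartialDerivatives

variable {f : ℝ × ℝ → ℝ}

theorem pdx_eq_of_hasDerivAt {f' : ℝ × ℝ → ℝ}
    (h : ∀ p, HasDerivAt (fun x => f (x, p.2)) (f' p) p.1) : pdx f = f' :=
  funext fun p => (h p).deriv

theorem pdt_eq_of_hasDerivAt {f' : ℝ × ℝ → ℝ}
    (h : ∀ p, HasDerivAt (fun t => f (p.1, t)) (f' p) p.2) : pdt f = f' :=
  funext fun p => (h p).deriv

theorem Differentiable.hasDerivAt_pdx (hf : Differentiable ℝ f) (p : ℝ × ℝ) :
    HasDerivAt (fun x => f (x, p.2)) (pdx f p) p.1 :=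
  (hf.comp (differentiable_id.prodMk (differentiable_const p.2)) p.1).hasDerivAt

theorem Differentiable.hasDerivAt_pdt (hf : Differentiable ℝ f) (p : ℝ × ℝ) :
    HasDerivAt (fun t => f (p.1, t)) (pdt f p) p.2 :=
  (hf.comp ((differentiable_const p.1).prodMk differentiable_id) p.2).hasDerivAt

theorem ContDiff.hasDerivAt_pdx (hf : ContDiff ℝ ∞ f) (p : ℝ × ℝ) :
    HasDerivAt (fun x => f (x, p.2)) (pdx f p) p.1 :=
  (hf.differentiable (by simp)).hasDerivAt_pdx p

theorem ContDiff.hasDerivAt_pdt (hf : ContDiff ℝ ∞ f) (p : ℝ × ℝ) :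
    HasDerivAt (fun t => f (p.1, t)) (pdt f p) p.2 :=
  (hf.differentiable (by simp)).hasDerivAt_pdt p

theorem pdx_eq_fderiv (hf : Differentiable ℝ f) : pdx f = fun p => fderiv ℝ f p (1, 0) :=
  pdx_eq_of_hasDerivAt fun p => (hf (p.1, p.2)).hasFDerivAt.comp_hasDerivAt p.1
    ((hasDerivAt_id p.1).prodMk (hasDerivAt_const p.1 p.2))

theorem pdt_eq_fderiv (hf : Differentiable ℝ f) : pdt f = fun p => fderiv ℝ f p (0, 1) :=
  pdt_eq_of_hasDerivAt fun p => (hf (p.1, p.2)).hasFDerivAt.comp_hasDerivAt p.2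
    ((hasDerivAt_const p.2 p.1).prodMk (hasDerivAt_id p.2))

theorem contDiff_pdx {m n : WithTop ℕ∞} (hf : ContDiff ℝ n f) (hmn : m + 1 ≤ n) :
    ContDiff ℝ m (pdx f) := by
  rw [pdx_eq_fderiv (hf.differentiable (one_pos.trans_le (le_add_self.trans hmn)).ne')]
  exact (hf.fderiv_right hmn).clm_apply contDiff_const

theorem contDiff_pdt {m n : WithTop ℕ∞} (hf : ContDiff ℝ n f) (hmn : m + 1 ≤ n) :
    ContDiff ℝ m (pdt f) := by
  rw [pdt_eq_fderiv (hf.differentiable (one_pos.trans_le (le_add_self.trans hmn)).ne')]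
  exact (hf.fderiv_right hmn).clm_apply contDiff_const

theorem pdt_pdx_comm (hf : ContDiff ℝ 2 f) : pdt (pdx f) = pdx (pdt f) := by
  have hf1 : Differentiable ℝ f := hf.differentiable two_ne_zero
  have hdf : Differentiable ℝ (fderiv ℝ f) :=
    (hf.fderiv_right (m := 1) le_rfl).differentiable one_ne_zero
  rw [pdt_eq_fderiv ((contDiff_pdx hf (m := 1) le_rfl).differentiable one_ne_zero),
    pdx_eq_fderiv ((contDiff_pdt hf (m := 1) le_rfl).differentiable one_ne_zero),
    pdx_eq_fderiv hf1, pdt_eq_fderiv hf1]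
  funext p
  rw [fderiv_clm_apply (hdf p) (differentiableAt_const _),
    fderiv_clm_apply (hdf p) (differentiableAt_const _)]
  simpa using ((hf.contDiffAt (x := p)).isSymmSndFDerivAt
    (by simp [minSmoothness_of_isRCLikeNormedField]) (1, 0) (0, 1)).symm

end PartialDerivatives

noncomputable def symmetryGenerator (v : ℝ × ℝ → ℝ) : ℝ × ℝ → ℝ := fun p =>
  2 * (pdx v p) ^ 3 * pdx (pdx (pdx v)) p / (pdx (pdx v) p) ^ 3
    - 3 * (pdx v p) ^ 2 / pdx (pdx v) p

theorem hasDerivAt_generator {A B C : ℝ → ℝ} {a b c s : ℝ} (hA : HasDerivAt A a s)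
    (hB : HasDerivAt B b s) (hC : HasDerivAt C c s) (hBs : B s ≠ 0) :
    HasDerivAt (fun s => 2 * A s ^ 3 * C s / B s ^ 3 - 3 * A s ^ 2 / B s)
      ((6 * A s ^ 2 * C s / B s ^ 3 - 6 * A s / B s) * a
        + (3 * A s ^ 2 / B s ^ 2 - 6 * A s ^ 3 * C s / B s ^ 4) * b
        + 2 * A s ^ 3 / B s ^ 3 * c) s := by
  refine ((((hA.fun_pow 3).const_mul 2).fun_mul hC).fun_div (hB.fun_pow 3) (pow_ne_zero 3 hBs)
    |>.fun_sub (((hA.fun_pow 2).const_mul 3).fun_div hB hBs)).congr_deriv ?_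
  field_simp
  ring

section Solution

variable {v : ℝ × ℝ → ℝ}

theorem pdt_pdx_of_solution (hv : ContDiff ℝ ∞ v) (hvxx : ∀ p, pdx (pdx v) p ≠ 0)
    (heq : ∀ p, pdt v p = -(pdx v p) ^ 2 / pdx (pdx v) p) :
    pdt (pdx v) = fun p =>
      -2 * pdx v p + pdx v p ^ 2 * pdx (pdx (pdx v)) p / pdx (pdx v) p ^ 2 := by
  have h1 : ContDiff ℝ ∞ (pdx v) := contDiff_pdx hv le_rfl
  have h2 : ContDiff ℝ ∞ (pdx (pdx v)) := contDiff_pdx h1 le_rfl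
  rw [pdt_pdx_comm (hv.of_le ENat.LEInfty.out), show pdt v = _ from funext heq]
  refine pdx_eq_of_hasDerivAt fun p => ?_
  have hb := hvxx p
  refine ((h1.hasDerivAt_pdx p).fun_pow 2).fun_neg.fun_div (h2.hasDerivAt_pdx p) hb
    |>.congr_deriv ?_
  field_simp
  ring

theorem pdt_pdx_pdx_of_solution (hv : ContDiff ℝ ∞ v) (hvxx : ∀ p, pdx (pdx v) p ≠ 0)
    (heq : ∀ p, pdt v p = -(pdx v p) ^ 2 / pdx (pdx v) p) :
    pdt (pdx (pdx v)) = fun p =>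
      -2 * pdx (pdx v) p + 2 * pdx v p * pdx (pdx (pdx v)) p / pdx (pdx v) p
        + pdx v p ^ 2 * pdx (pdx (pdx (pdx v))) p / pdx (pdx v) p ^ 2
        - 2 * pdx v p ^ 2 * pdx (pdx (pdx v)) p ^ 2 / pdx (pdx v) p ^ 3 := by
  have h1 : ContDiff ℝ ∞ (pdx v) := contDiff_pdx hv le_rfl
  have h2 : ContDiff ℝ ∞ (pdx (pdx v)) := contDiff_pdx h1 le_rfl
  have h3 : ContDiff ℝ ∞ (pdx (pdx (pdx v))) := contDiff_pdx h2 le_rfl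
  rw [pdt_pdx_comm (h1.of_le ENat.LEInfty.out), pdt_pdx_of_solution hv hvxx heq]
  refine pdx_eq_of_hasDerivAt fun p => ?_
  have hb := hvxx p
  have ha := h1.hasDerivAt_pdx p
  refine (ha.const_mul (-2)).fun_add
    (((ha.fun_pow 2).fun_mul (h3.hasDerivAt_pdx p)).fun_div
      ((h2.hasDerivAt_pdx p).fun_pow 2) (pow_ne_zero 2 hb)) |>.congr_deriv ?_
  field_simp
  ring

theorem pdt_pdx_pdx_pdx_of_solution (hv : ContDiff ℝ ∞ v) (hvxx : ∀ p, pdx (pdx v) p ≠ 0)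
    (heq : ∀ p, pdt v p = -(pdx v p) ^ 2 / pdx (pdx v) p) :
    pdt (pdx (pdx (pdx v))) = fun p =>
      4 * pdx v p * pdx (pdx (pdx (pdx v))) p / pdx (pdx v) p
        - 6 * pdx v p * pdx (pdx (pdx v)) p ^ 2 / pdx (pdx v) p ^ 2
        + pdx v p ^ 2 * pdx (pdx (pdx (pdx (pdx v)))) p / pdx (pdx v) p ^ 2
        - 6 * pdx v p ^ 2 * pdx (pdx (pdx v)) p * pdx (pdx (pdx (pdx v))) p / pdx (pdx v) p ^ 3
        + 6 * pdx v p ^ 2 * pdx (pdx (pdx v)) p ^ 3 / pdx (pdx v) p ^ 4 := by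
  have h1 : ContDiff ℝ ∞ (pdx v) := contDiff_pdx hv le_rfl
  have h2 : ContDiff ℝ ∞ (pdx (pdx v)) := contDiff_pdx h1 le_rfl
  have h3 : ContDiff ℝ ∞ (pdx (pdx (pdx v))) := contDiff_pdx h2 le_rfl
  have h4 : ContDiff ℝ ∞ (pdx (pdx (pdx (pdx v)))) := contDiff_pdx h3 le_rfl
  rw [pdt_pdx_comm (h2.of_le ENat.LEInfty.out), pdt_pdx_pdx_of_solution hv hvxx heq]
  refine pdx_eq_of_hasDerivAt fun p => ?_
  have hb0 := hvxx p
  have ha := h1.hasDerivAt_pdx p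
  have hb := h2.hasDerivAt_pdx p
  have hc := h3.hasDerivAt_pdx p
  have hd := h4.hasDerivAt_pdx p
  refine (((hb.const_mul (-2)).fun_add
    (((ha.const_mul 2).fun_mul hc).fun_div hb hb0)).fun_add
    (((ha.fun_pow 2).fun_mul hd).fun_div (hb.fun_pow 2) (pow_ne_zero 2 hb0))).fun_sub
    ((((ha.fun_pow 2).const_mul 2).fun_mul (hc.fun_pow 2)).fun_div (hb.fun_pow 3)
      (pow_ne_zero 3 hb0)) |>.congr_deriv ?_
  field_simp
  ring

theorem pdx_symmetryGenerator (hv : ContDiff ℝ ∞ v) (hvxx : ∀ p, pdx (pdx v) p ≠ 0) :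
    pdx (symmetryGenerator v) = fun p =>
      9 * pdx v p ^ 2 * pdx (pdx (pdx v)) p / pdx (pdx v) p ^ 2
        + 2 * pdx v p ^ 3 * pdx (pdx (pdx (pdx v))) p / pdx (pdx v) p ^ 3
        - 6 * pdx v p ^ 3 * pdx (pdx (pdx v)) p ^ 2 / pdx (pdx v) p ^ 4 - 6 * pdx v p := by
  have h1 : ContDiff ℝ ∞ (pdx v) := contDiff_pdx hv le_rfl
  have h2 : ContDiff ℝ ∞ (pdx (pdx v)) := contDiff_pdx h1 le_rfl
  have h3 : ContDiff ℝ ∞ (pdx (pdx (pdx v))) := contDiff_pdx h2 le_rfl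
  refine pdx_eq_of_hasDerivAt fun p => ?_
  have hb0 := hvxx p
  refine hasDerivAt_generator (h1.hasDerivAt_pdx p) (h2.hasDerivAt_pdx p)
    (h3.hasDerivAt_pdx p) hb0 |>.congr_deriv ?_
  field_simp
  ring

theorem pdx_pdx_symmetryGenerator (hv : ContDiff ℝ ∞ v) (hvxx : ∀ p, pdx (pdx v) p ≠ 0) :
    pdx (pdx (symmetryGenerator v)) = fun p =>
      -6 * pdx (pdx v) p + 18 * pdx v p * pdx (pdx (pdx v)) p / pdx (pdx v) p
        + 15 * pdx v p ^ 2 * pdx (pdx (pdx (pdx v))) p / pdx (pdx v) p ^ 2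
        - 36 * pdx v p ^ 2 * pdx (pdx (pdx v)) p ^ 2 / pdx (pdx v) p ^ 3
        + 2 * pdx v p ^ 3 * pdx (pdx (pdx (pdx (pdx v)))) p / pdx (pdx v) p ^ 3
        - 18 * pdx v p ^ 3 * pdx (pdx (pdx v)) p * pdx (pdx (pdx (pdx v))) p / pdx (pdx v) p ^ 4
        + 24 * pdx v p ^ 3 * pdx (pdx (pdx v)) p ^ 3 / pdx (pdx v) p ^ 5 := by
  have h1 : ContDiff ℝ ∞ (pdx v) := contDiff_pdx hv le_rfl
  have h2 : ContDiff ℝ ∞ (pdx (pdx v)) := contDiff_pdx h1 le_rfl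
  have h3 : ContDiff ℝ ∞ (pdx (pdx (pdx v))) := contDiff_pdx h2 le_rfl
  have h4 : ContDiff ℝ ∞ (pdx (pdx (pdx (pdx v)))) := contDiff_pdx h3 le_rfl
  rw [pdx_symmetryGenerator hv hvxx]
  refine pdx_eq_of_hasDerivAt fun p => ?_
  have hb0 := hvxx p
  have ha := h1.hasDerivAt_pdx p
  have hb := h2.hasDerivAt_pdx p
  have hc := h3.hasDerivAt_pdx p
  have hd := h4.hasDerivAt_pdx p
  refine ((((((ha.fun_pow 2).const_mul 9).fun_mul hc).fun_div (hb.fun_pow 2)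
      (pow_ne_zero 2 hb0)).fun_add
    ((((ha.fun_pow 3).const_mul 2).fun_mul hd).fun_div (hb.fun_pow 3) (pow_ne_zero 3 hb0))).fun_sub
    ((((ha.fun_pow 3).const_mul 6).fun_mul (hc.fun_pow 2)).fun_div (hb.fun_pow 4)
      (pow_ne_zero 4 hb0))).fun_sub (ha.const_mul 6) |>.congr_deriv ?_
  field_simp
  ring

theorem pdt_symmetryGenerator (hv : ContDiff ℝ ∞ v) (hvxx : ∀ p, pdx (pdx v) p ≠ 0) :
    pdt (symmetryGenerator v) = fun p =>
      (6 * pdx v p ^ 2 * pdx (pdx (pdx v)) p / pdx (pdx v) p ^ 3 - 6 * pdx v p / pdx (pdx v) p)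
          * pdt (pdx v) p
        + (3 * pdx v p ^ 2 / pdx (pdx v) p ^ 2
            - 6 * pdx v p ^ 3 * pdx (pdx (pdx v)) p / pdx (pdx v) p ^ 4) * pdt (pdx (pdx v)) p
        + 2 * pdx v p ^ 3 / pdx (pdx v) p ^ 3 * pdt (pdx (pdx (pdx v))) p := by
  have h1 : ContDiff ℝ ∞ (pdx v) := contDiff_pdx hv le_rfl
  have h2 : ContDiff ℝ ∞ (pdx (pdx v)) := contDiff_pdx h1 le_rfl
  have h3 : ContDiff ℝ ∞ (pdx (pdx (pdx v))) := contDiff_pdx h2 le_rfl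
  exact pdt_eq_of_hasDerivAt fun p => hasDerivAt_generator (h1.hasDerivAt_pdt p)
    (h2.hasDerivAt_pdt p) (h3.hasDerivAt_pdt p) (hvxx p)

end Solution

/-- Subcase 1.3a: for a solution of `v_t = −v_x²/v_xx`, the function
`η = 2 v_x³ v_xxx / v_xx³ − 3 v_x² / v_xx` satisfies the linearized
(Lie–Bäcklund symmetry) equation. -/
theorem subcase13a_third_order_symmetry
    (v : ℝ × ℝ → ℝ) (hv : ContDiff ℝ (⊤ : ℕ∞) v)
    (hvxx : ∀ p : ℝ × ℝ, pdx (pdx v) p ≠ 0)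
    (heq : ∀ p : ℝ × ℝ, pdt v p = -(pdx v p) ^ 2 / pdx (pdx v) p)
    (η : ℝ × ℝ → ℝ)
    (hη : η = fun p =>
      2 * (pdx v p) ^ 3 * pdx (pdx (pdx v)) p / (pdx (pdx v) p) ^ 3
        - 3 * (pdx v p) ^ 2 / pdx (pdx v) p) :
    ∀ p : ℝ × ℝ, pdt η p =
      (-2 * pdx v p / pdx (pdx v) p) * pdx η p
      + ((pdx v p) ^ 2 / (pdx (pdx v) p) ^ 2) * pdx (pdx η) p := by
  obtain rfl : η = symmetryGenerator v := hη
  intro p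
  rw [pdx_pdx_symmetryGenerator hv hvxx, pdx_symmetryGenerator hv hvxx,
    pdt_symmetryGenerator hv hvxx, pdt_pdx_of_solution hv hvxx heq,
    pdt_pdx_pdx_of_solution hv hvxx heq, pdt_pdx_pdx_pdx_of_solution hv hvxx heq]
  have hb := hvxx p
  field_simp
  ring
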